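/- arXiv:math/0209208 — 2 statements merged into one kernel-verified Lean document; each statement's English description precedes it below -/
import Mathlib

section
/- If η₀ ∈ ℙ is a steady state of the coarsening equation, then there exists a constant β ≥ 0 such that η₀(y) = β/y for almost every y ∈ [1,2]. -/
open MeasureTheory Set Filter Topology
open scoped NNReal ENNReal

noncomputable section

/-- Convolution of two real functions on `ℝ`. -/
def conv (f g : ℝ → ℝ) : ℝ → ℝ := fun x => ∫ y : ℝ, f y * g (x - y)

/-- `convPow f j` is the `(j+1)`-fold convolution power `f^{*(j+1)}`. -/
def convPow (f : ℝ → ℝ) : ℕ → ℝ → ℝ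
  | 0 => f
  | j + 1 => conv f (convPow f j)

/-- The mean-field nonlinearity `𝔔[f] = Σ_{j=1}^N p_j f^{*j}`. -/
def QQ (N : ℕ) (p : ℕ → ℝ) (f : ℝ → ℝ) : ℝ → ℝ :=
  fun x => ∑ j ∈ Finset.range N, p (j + 1) * convPow f j x

/-- The polynomial `Q(z) = Σ_{j=1}^N p_j z^j`. -/
def Qpoly (N : ℕ) (p : ℕ → ℝ) (z : ℝ) : ℝ :=
  ∑ j ∈ Finset.range N, p (j + 1) * z ^ (j + 1)

/-- The derivative `Q'(z) = Σ_{j=1}^N j p_j z^(j-1)`. -/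
def Qderiv (N : ℕ) (p : ℕ → ℝ) (z : ℝ) : ℝ :=
  ∑ j ∈ Finset.range N, p (j + 1) * (j + 1) * z ^ j

/-- The polynomial `Q` as a function on `ℂ`. -/
def Qc (N : ℕ) (p : ℕ → ℝ) (z : ℂ) : ℂ :=
  ∑ j ∈ Finset.range N, (p (j + 1) : ℂ) * z ^ (j + 1)

/-- The shift operator `(T₁ f)(y) = f (y-1)` for `y ≥ 2`, `0` otherwise. -/
def T1 (f : ℝ → ℝ) : ℝ → ℝ := fun y => if 2 ≤ y then f (y - 1) else 0

/-- The linear semigroup `(S_τ f)(y) = e^τ f(e^τ y)` for `y ≥ 1`, `0` otherwise. -/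
def Sop (τ : ℝ) (f : ℝ → ℝ) : ℝ → ℝ :=
  fun y => if 1 ≤ y then Real.exp τ * f (Real.exp τ * y) else 0

/-- `η ∈ ℙ`: a probability density on `(1,∞)`, extended by zero. -/
def MemP (η : ℝ → ℝ) : Prop :=
  (∀ᵐ x : ℝ ∂volume, x ≤ 1 → η x = 0) ∧ (∀ᵐ x : ℝ ∂volume, 0 ≤ η x) ∧
    Integrable η ∧ ∫ x : ℝ, η x = 1

/-- Weighted `L^p` norm `‖w‖_{p,γ} = ‖y^γ w‖_{L^p((1,∞))}`. -/
def wnorm (q γ : ℝ) (w : ℝ → ℝ) : ℝ :=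
  (∫ y in Ioi (1 : ℝ), (y ^ γ * |w y|) ^ q) ^ (1 / q)

/-- Membership in the weighted space `L^p_γ` on `(1,∞)`. -/
def MemW (q γ : ℝ) (w : ℝ → ℝ) : Prop :=
  AEStronglyMeasurable w (volume.restrict (Ioi 1)) ∧
    IntegrableOn (fun y => (y ^ γ * |w y|) ^ q) (Ioi 1)

/-- `η : [0,∞) → L¹((1,∞))` is a (continuous) global solution of the coarsening
integral equation `η(τ) = S_τ η₀ + ∫₀^τ β(s) S_{τ-s} T₁𝔔[η(s)] ds`, with trace `β`. -/
def SolvesCIE (N : ℕ) (p : ℕ → ℝ) (η₀ : ℝ → ℝ) (η : ℝ → ℝ → ℝ) (β : ℝ → ℝ) : Prop :=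
  (∀ τ, 0 ≤ τ → IntegrableOn (η τ) (Ioi 1)) ∧
  (∀ τ, 0 ≤ τ → ∀ᵐ y : ℝ ∂volume, y ≤ 1 → η τ y = 0) ∧
  (∀ τ₀, 0 ≤ τ₀ →
    Tendsto (fun τ => ∫ y in Ioi (1 : ℝ), |η τ y - η τ₀ y|) (𝓝[Ici 0] τ₀) (𝓝 0)) ∧
  LocallyIntegrableOn β (Ici 0) ∧
  (∀ τ₀, 0 ≤ τ₀ → ∀ᵐ σ ∂volume.restrict (Icc 0 (Real.log 2)),
    β (τ₀ + σ) = Real.exp σ * η τ₀ (Real.exp σ)) ∧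
  (∀ τ, 0 ≤ τ → ∀ᵐ y : ℝ ∂volume, 1 < y →
    η τ y = Sop τ η₀ y + ∫ s in Ioc (0 : ℝ) τ, β s * Sop (τ - s) (T1 (QQ N p (η s))) y)

/-- Fourier transform of a function supported in `[1,∞)`, at a point of the
closed lower half-plane. -/
def fourierL (f : ℝ → ℝ) (ξ : ℂ) : ℂ :=
  ∫ x in Ioi (1 : ℝ), Complex.exp (-(Complex.I * ξ * (x : ℂ))) * (f x : ℂ)

/-- `w = 𝒩(ρ)`: `w` is a nonnegative locally integrable function on `[1,∞)`
(extended by zero) whose Fourier transform on the open lower half-plane equals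
`φ (ρ̂)`. -/
def IsN (φ : ℂ → ℂ) (ρ w : ℝ → ℝ) : Prop :=
  LocallyIntegrableOn w (Ici 1) ∧
  (∀ᵐ x : ℝ ∂volume, 0 ≤ w x) ∧ (∀ᵐ x : ℝ ∂volume, x < 1 → w x = 0) ∧
  ∀ ξ : ℂ, ξ.im < 0 →
    IntegrableOn (fun x : ℝ => Complex.exp (-(Complex.I * ξ * (x : ℂ))) * (w x : ℂ)) (Ioi 1) ∧
    fourierL w ξ = φ (fourierL ρ ξ)

/-- `η` is the global solution of the stationary ODE `(yη)'(y) + β (T₁𝔔[η])(y) = 0`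
on `[1,∞)` with `η(1) = β`, written in integrated form. -/
def IsODESol (N : ℕ) (p : ℕ → ℝ) (β : ℝ) (η : ℝ → ℝ) : Prop :=
  (∀ x, x < 1 → η x = 0) ∧ ContinuousOn η (Ici 1) ∧
  ∀ y, 1 ≤ y → y * η y = β - β * ∫ t in Icc (1 : ℝ) y, T1 (QQ N p η) t

/-- `w*(y) = 1/y` for `y ≥ 1`, `0` otherwise. -/
def wstar : ℝ → ℝ := fun y => if 1 ≤ y then 1 / y else 0

/-- The constant `κ = exp ∫₀¹ (1/(1-z) - q/(1-Q(z))) dz`. -/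
def kappa (N : ℕ) (p : ℕ → ℝ) : ℝ :=
  Real.exp (∫ z in (0 : ℝ)..1, (1 / (1 - z) - Qderiv N p 1 / (1 - Qpoly N p z)))

lemma lipOn_image_null {K : ℝ≥0} {f : ℝ → ℝ} {s : Set ℝ}
    (h : LipschitzOnWith K f s) (hs : volume s = 0) : volume (f '' s) = 0 := by
  have h1 := h.hausdorffMeasure_image_le (d := 1) zero_le_one
  rw [MeasureTheory.hausdorffMeasure_real] at h1
  refine le_antisymm (h1.trans ?_) (zero_le)
  rw [hs, mul_zero]

lemma log_lipschitz : LipschitzOnWith 1 Real.log (Icc (1:ℝ) 2) := by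
  apply (convex_Icc (1:ℝ) 2).lipschitzOnWith_of_nnnorm_hasDerivWithin_le
    (f' := fun x => x⁻¹)
  · intro x hx
    exact (Real.hasDerivAt_log (by linarith [hx.1] : x ≠ 0)).hasDerivWithinAt
  · intro x hx
    rw [← NNReal.coe_le_coe, coe_nnnorm, Real.norm_eq_abs, NNReal.coe_one,
      abs_inv, abs_of_nonneg (by linarith [hx.1])]
    rw [inv_le_one_iff₀]
    right; exact hx.1

lemma exp_lipschitz : LipschitzOnWith 2 Real.exp (Icc (0:ℝ) (Real.log 2)) := by
  apply (convex_Icc (0:ℝ) (Real.log 2)).lipschitzOnWith_of_nnnorm_hasDerivWithin_le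
    (f' := Real.exp)
  · intro x hx
    exact (Real.hasDerivAt_exp x).hasDerivWithinAt
  · intro x hx
    rw [← NNReal.coe_le_coe, coe_nnnorm, Real.norm_eq_abs,
      abs_of_pos (Real.exp_pos x)]
    push_cast
    calc Real.exp x ≤ Real.exp (Real.log 2) := Real.exp_le_exp.mpr hx.2
      _ = 2 := Real.exp_log two_pos

lemma exp_preimage_null {N : Set ℝ} (hN : volume N = 0) :
    volume ({σ : ℝ | Real.exp σ ∈ N} ∩ Icc (0:ℝ) (Real.log 2)) = 0 := by
  apply measure_mono_null (t := Real.log '' (N ∩ Icc 1 2)) ?_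
    (lipOn_image_null (log_lipschitz.mono inter_subset_right) (measure_mono_null inter_subset_left hN))
  rintro σ ⟨hσN, hσ0, hσa⟩
  refine ⟨Real.exp σ, ⟨hσN, ?_, ?_⟩, Real.log_exp σ⟩
  · calc (1:ℝ) = Real.exp 0 := Real.exp_zero.symm
      _ ≤ _ := Real.exp_le_exp.mpr hσ0
  · calc Real.exp σ ≤ Real.exp (Real.log 2) := Real.exp_le_exp.mpr hσa
      _ = 2 := Real.exp_log two_pos

lemma log_preimage_null {N : Set ℝ} (hN : volume (N ∩ Icc (0:ℝ) (Real.log 2)) = 0) :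
    volume ({y : ℝ | Real.log y ∈ N} ∩ Icc (1:ℝ) 2) = 0 := by
  apply measure_mono_null (t := Real.exp '' (N ∩ Icc 0 (Real.log 2))) ?_
    (lipOn_image_null (exp_lipschitz.mono inter_subset_right) hN)
  rintro y ⟨hyN, hy1, hy2⟩
  exact ⟨Real.log y, ⟨hyN, Real.log_nonneg hy1,
    (Real.log_le_log_iff (by linarith) two_pos).mpr hy2⟩, Real.exp_log (by linarith)⟩
/-- **Lemma (trace of a steady state).** -/
theorem steady_state_trace
    (N : ℕ) (p : ℕ → ℝ) (hN : 1 ≤ N) (hp : ∀ j, 0 ≤ p j)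
    (hpsum : ∑ j ∈ Finset.range N, p (j + 1) = 1)
    (η₀ : ℝ → ℝ) (hη₀ : MemP η₀)
    (hsteady : ∃ β : ℝ → ℝ, SolvesCIE N p η₀ (fun _ => η₀) β) :
    ∃ c : ℝ, 0 ≤ c ∧ ∀ᵐ y ∂volume.restrict (Icc (1 : ℝ) 2), η₀ y = c / y := by
  obtain ⟨β, -, -, -, hβloc, htr, -⟩ := hsteady
  have hη₀nn : ∀ᵐ x : ℝ ∂volume, 0 ≤ η₀ x := hη₀.2.1
  have hη₀int : Integrable η₀ := hη₀.2.2.1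
  clear hη₀ hN hp hpsum
  have ha0 : 0 < Real.log 2 := Real.log_pos one_lt_two
  have ha1 : Real.log 2 < 1 := by
    have := Real.log_two_lt_d9; linarith
  -- measurable representatives
  obtain ⟨g, hgm, hgae⟩ := hη₀int.aestronglyMeasurable
  obtain ⟨b, hbm, hbae⟩ := hβloc.aestronglyMeasurable
  have hNg : volume {x | η₀ x ≠ g x} = 0 := by
    have := ae_iff.mp hgae; simpa using this
  have hNb : volume ({x | β x ≠ b x} ∩ Ici 0) = 0 := by
    have h1 := ae_iff.mp hbae
    rw [Measure.restrict_apply' measurableSet_Ici] at h1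
    simpa using h1
  set f' : ℝ → ℝ := fun σ => Real.exp σ * g (Real.exp σ) with hf'def
  set ν := volume.restrict (Icc (0:ℝ) (Real.log 2)) with hν
  set μ₁ := volume.restrict (Icc (0:ℝ) 1) with hμ₁
  -- f = f' a.e. on [0, log 2]
  have hff' : ν {σ | Real.exp σ * η₀ (Real.exp σ) ≠ f' σ} = 0 := by
    rw [hν, Measure.restrict_apply' measurableSet_Icc]
    apply measure_mono_null ?_ (exp_preimage_null hNg)
    rintro σ ⟨h1, h2⟩
    exact ⟨fun hc => h1 (by rw [hf'def]; simp only []; rw [hc]), h2⟩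
  -- trace with measurable representatives
  have htr' : ∀ t : ℝ, 0 ≤ t → ν {σ | b (t + σ) ≠ f' σ} = 0 := by
    intro t ht
    have h1 : ν {σ | β (t + σ) ≠ Real.exp σ * η₀ (Real.exp σ)} = 0 := by
      have := ae_iff.mp (htr t ht); simpa [hν] using this
    have h2 : ν {σ | β (t + σ) ≠ b (t + σ)} = 0 := by
      rw [hν, Measure.restrict_apply' measurableSet_Icc]
      apply measure_mono_null (t := (fun σ => t + σ) ⁻¹' ({x | β x ≠ b x} ∩ Ici 0)) ?_ ?_
      · rintro σ ⟨h1, h2, h3⟩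
        exact ⟨h1, by simp only [mem_Ici]; linarith⟩
      · rw [measure_preimage_add]; exact hNb
    apply measure_mono_null ?_
      (measure_union_null h1 (measure_union_null h2 hff'))
    intro σ hσ
    simp only [mem_union, mem_setOf_eq]
    by_contra hcon
    push_neg at hcon
    obtain ⟨e1, e2, e3⟩ := hcon
    exact hσ (by rw [← e2, e1, e3])
  -- Fubini
  have hbmeas : Measurable b := hbm.measurable
  have hf'meas : Measurable f' :=
    Real.measurable_exp.mul (hgm.measurable.comp Real.measurable_exp)
  set S : Set (ℝ × ℝ) := {q | b (q.1 + q.2) ≠ f' q.2} with hSdef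
  have hS : MeasurableSet S := by
    have : S = (fun q : ℝ × ℝ => b (q.1 + q.2) - f' q.2) ⁻¹' ({0}ᶜ) := by
      ext q; simp [hSdef, sub_eq_zero]
    rw [this]
    exact ((hbmeas.comp (measurable_fst.add measurable_snd)).sub
      (hf'meas.comp measurable_snd)) (measurableSet_singleton 0).compl
  have hprod : (μ₁.prod ν) S = 0 := by
    rw [Measure.measure_prod_null hS]
    filter_upwards [ae_restrict_mem (μ := volume) measurableSet_Icc] with t ht
    have := htr' t ht.1
    simpa [hSdef] using this
  have hprod' : (ν.prod μ₁) (Prod.swap ⁻¹' S) = 0 := by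
    rw [← Measure.prod_swap, Measure.map_apply measurable_swap (measurable_swap hS)]
    simpa [Set.preimage_preimage] using hprod
  have hgood : ∀ᵐ σ ∂ν, μ₁ {t | b (t + σ) ≠ f' σ} = 0 := by
    have h := Measure.measure_ae_null_of_prod_null hprod'
    filter_upwards [h] with σ hσ
    simpa [hSdef, Set.preimage] using hσ
  -- key comparison claim
  have key : ∀ σ₁ σ₂ : ℝ, σ₁ ∈ Icc 0 (Real.log 2) → σ₂ ∈ Icc 0 (Real.log 2) → σ₁ ≤ σ₂ →
      μ₁ {t | b (t + σ₁) ≠ f' σ₁} = 0 → μ₁ {t | b (t + σ₂) ≠ f' σ₂} = 0 →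
      f' σ₁ = f' σ₂ := by
    intro σ₁ σ₂ hm1 hm2 hle hn1 hn2
    set d := σ₂ - σ₁ with hd
    have hd0 : 0 ≤ d := by simp [hd]; linarith
    have hd1 : d < 1 := by
      have := hm2.2; have := hm1.1; simp only [hd]; linarith
    set B1 := {t | b (t + σ₁) ≠ f' σ₁} with hB1
    set B2 := {t | b (t + σ₂) ≠ f' σ₂} with hB2
    have hvol1 : volume (B1 ∩ Icc 0 1) = 0 := by
      rw [hμ₁, Measure.restrict_apply' measurableSet_Icc] at hn1; exact hn1
    have hvol2 : volume (B2 ∩ Icc 0 1) = 0 := by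
      rw [hμ₁, Measure.restrict_apply' measurableSet_Icc] at hn2; exact hn2
    set U : Set ℝ := B1 ∪ (fun t => t - d) ⁻¹' B2 with hU
    have hIU : volume (Icc d 1 ∩ U) = 0 := by
      have h2' : volume ((fun t : ℝ => t - d) ⁻¹' (B2 ∩ Icc 0 1)) = 0 := by
        have heq : (fun t : ℝ => t - d) = (fun t : ℝ => -d + t) := by
          funext t; ring
        rw [heq, measure_preimage_add]; exact hvol2
      apply measure_mono_null ?_ (measure_union_null hvol1 h2')
      rintro t ⟨⟨htd, ht1⟩, htU⟩
      rcases htU with h | h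
      · exact Or.inl ⟨h, by linarith, ht1⟩
      · exact Or.inr ⟨h, ⟨by simp; linarith, by simp; linarith⟩⟩
    have hne : volume (Icc d 1 \ U) ≠ 0 := by
      intro h0
      have hsub : Icc d 1 ⊆ (Icc d 1 \ U) ∪ (Icc d 1 ∩ U) := by
        intro x hx
        by_cases hxu : x ∈ U
        · exact Or.inr ⟨hx, hxu⟩
        · exact Or.inl ⟨hx, hxu⟩
      have : volume (Icc d 1) = 0 := by
        refine le_antisymm ((measure_mono hsub).trans ?_) (zero_le)
        calc volume ((Icc d 1 \ U) ∪ (Icc d 1 ∩ U))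
            ≤ volume (Icc d 1 \ U) + volume (Icc d 1 ∩ U) := measure_union_le _ _
          _ = 0 := by rw [h0, hIU, add_zero]
      rw [Real.volume_Icc] at this
      rw [ENNReal.ofReal_eq_zero] at this
      linarith
    obtain ⟨t, htI, htU⟩ := nonempty_of_measure_ne_zero hne
    have ht1 : t ∉ B1 := fun h => htU (Or.inl h)
    have ht2 : t - d ∉ B2 := fun h => htU (Or.inr h)
    have e1 : b (t + σ₁) = f' σ₁ := not_ne_iff.mp ht1
    have e2 : b ((t - d) + σ₂) = f' σ₂ := not_ne_iff.mp ht2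
    have e3 : t - d + σ₂ = t + σ₁ := by simp [hd]; ring
    rw [← e1, ← e2, e3]
  -- pick a reference point
  have hν_ne : ν ≠ 0 := by
    intro h0
    have h1 : ν (Icc (0:ℝ) (Real.log 2)) = 0 := by rw [h0]; rfl
    rw [hν, Measure.restrict_apply' measurableSet_Icc, inter_self,
      Real.volume_Icc, ENNReal.ofReal_eq_zero] at h1
    linarith
  have : (ae ν).NeBot := ae_neBot.mpr hν_ne
  obtain ⟨σ₁, hσ₁good, hσ₁mem⟩ :=
    (hgood.and (ae_restrict_mem (μ := volume) measurableSet_Icc)).exists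
  set c := f' σ₁ with hcdef
  have hffae : ∀ᵐ σ ∂ν, Real.exp σ * η₀ (Real.exp σ) = f' σ := by
    rw [ae_iff]; simpa using hff'
  have hconst : ∀ᵐ σ ∂ν, Real.exp σ * η₀ (Real.exp σ) = c := by
    filter_upwards [hgood, ae_restrict_mem (μ := volume) measurableSet_Icc, hffae]
      with σ hg hm hfeq
    rw [hfeq]
    rcases le_total σ σ₁ with h | h
    · exact key σ σ₁ hm hσ₁mem h hg hσ₁good
    · exact (key σ₁ σ hσ₁mem hm h hσ₁good hg).symm
  -- transfer back to [1,2]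
  have hfinal : ∀ᵐ y ∂volume.restrict (Icc (1:ℝ) 2), η₀ y = c / y := by
    rw [ae_iff, Measure.restrict_apply' measurableSet_Icc]
    apply measure_mono_null ?_
      (log_preimage_null (N := {σ | Real.exp σ * η₀ (Real.exp σ) ≠ c}) ?_)
    · rintro y ⟨hy, hy12⟩
      refine ⟨?_, hy12⟩
      have hy1 : (1:ℝ) ≤ y := hy12.1
      simp only [mem_setOf_eq]
      rw [Real.exp_log (by linarith)]
      intro hc
      apply hy
      rw [← hc, mul_comm, mul_div_assoc, div_self (by linarith : y ≠ 0), mul_one]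
    · have := ae_iff.mp hconst
      rw [hν, Measure.restrict_apply' measurableSet_Icc] at this
      simpa using this
  -- nonnegativity of c
  have hres_ne : volume.restrict (Icc (1:ℝ) 2) ≠ 0 := by
    intro h0
    have h1 : (volume.restrict (Icc (1:ℝ) 2)) (Icc (1:ℝ) 2) = 0 := by rw [h0]; rfl
    rw [Measure.restrict_apply' measurableSet_Icc, inter_self,
      Real.volume_Icc, ENNReal.ofReal_eq_zero] at h1
    linarith
  have : (ae (volume.restrict (Icc (1:ℝ) 2))).NeBot := ae_neBot.mpr hres_ne
  obtain ⟨y, ⟨hy1, hy2⟩, hy3⟩ :=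
    ((hfinal.and (ae_restrict_of_ae hη₀nn)).and
      (ae_restrict_mem (μ := volume) measurableSet_Icc)).exists
  have hy0 : (0:ℝ) < y := by linarith [hy3.1]
  have hc0 : 0 ≤ c := by
    have h1 : 0 ≤ c / y := hy1 ▸ hy2
    have := mul_nonneg h1 hy0.le
    rwa [div_mul_cancel₀ c hy0.ne'] at this
  exact ⟨c, hc0, hfinal⟩


end
end

section
/- For any β ∈ ℝ, the ordinary differential equation (yη)'(y) + β (T₁𝔔[η])(y) = 0 for y ≥ 1, with initial value η(1) = β, has a unique global solution η : [1,∞) → ℝ. -/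
open MeasureTheory Set Filter Topology

noncomputable section

/-!
Because all functions vanish below `1`, the `(j+1)`-fold convolution power of `η` on
`(-∞, a + j]` only sees `η` on `(-∞, a]`, so `T₁𝔔[η]` on `(-∞, a + 1]` only sees `η`
on `(-∞, a]`. The integrated equation is a fixed-point problem `η = Φ η` (`Φ = odeMap`)
for an operator with this unit delay: the Picard iterates `Φⁿ 0` are stationary on
`(-∞, n]`, their limit is a fixed point, and two fixed points agree on every `(-∞, n]` by
induction on `n`. Continuity also propagates one unit at a time: on `[1, n + 1]` a fixed
point coincides with the image of its (integrable) truncation to `[1, n]`, and `Φ` maps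
integrable functions to continuous ones.
-/

section UnitDelay

structure IsUnitDelay (F : (ℝ → ℝ) → ℝ → ℝ) : Prop where
  eq_zero_of_lt_one : ∀ f, ∀ x < 1, F f x = 0
  eqOn_Iic_add_one : ∀ {f g : ℝ → ℝ}, (∀ x < 1, f x = 0) → (∀ x < 1, g x = 0) →
    ∀ a, EqOn f g (Iic a) → EqOn (F f) (F g) (Iic (a + 1))

variable {F : (ℝ → ℝ) → ℝ → ℝ}

namespace IsUnitDelay

lemma eq_zero_of_isFixedPt (hF : IsUnitDelay F) {f : ℝ → ℝ} (hf : Function.IsFixedPt F f) :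
    ∀ x < 1, f x = 0 := fun x hx => hf ▸ hF.eq_zero_of_lt_one f x hx

lemma iterate_eq_zero_of_lt_one (hF : IsUnitDelay F) (n : ℕ) :
    ∀ x < 1, F^[n] 0 x = 0 := by
  cases n with
  | zero => exact fun _ _ => rfl
  | succ n =>
    intro x hx
    rw [Function.iterate_succ_apply']
    exact hF.eq_zero_of_lt_one _ x hx

lemma eqOn_iterate_add (hF : IsUnitDelay F) (n m : ℕ) :
    EqOn (F^[n] 0) (F^[n + m] 0) (Iic n) := by
  induction n with
  | zero =>
    intro x hx
    have hx1 : x < 1 := by simp only [mem_Iic, Nat.cast_zero] at hx; linarith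
    rw [hF.iterate_eq_zero_of_lt_one _ x hx1, hF.iterate_eq_zero_of_lt_one _ x hx1]
  | succ n ih =>
    intro x hx
    rw [show n + 1 + m = n + m + 1 by omega, Function.iterate_succ_apply',
      Function.iterate_succ_apply']
    exact hF.eqOn_Iic_add_one (hF.iterate_eq_zero_of_lt_one _)
      (hF.iterate_eq_zero_of_lt_one _) n ih (by simpa using hx)

def fixedPoint (F : (ℝ → ℝ) → ℝ → ℝ) : ℝ → ℝ := fun x => F^[⌈x⌉₊] 0 x

lemma eqOn_fixedPoint_iterate (hF : IsUnitDelay F) (n : ℕ) :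
    EqOn (fixedPoint F) (F^[n] 0) (Iic n) := by
  intro x hx
  have hle : ⌈x⌉₊ ≤ n := Nat.ceil_le.2 hx
  rw [fixedPoint, ← Nat.add_sub_cancel' hle]
  exact hF.eqOn_iterate_add _ _ (Nat.le_ceil x)

lemma isFixedPt_fixedPoint (hF : IsUnitDelay F) : Function.IsFixedPt F (fixedPoint F) := by
  funext y
  set n := ⌈y⌉₊
  have hy : y ≤ n := Nat.le_ceil y
  have hsupp : ∀ x < 1, fixedPoint F x = 0 := fun x hx =>
    hF.iterate_eq_zero_of_lt_one _ x hx
  calc F (fixedPoint F) y = F (F^[n] 0) y :=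
        hF.eqOn_Iic_add_one hsupp (hF.iterate_eq_zero_of_lt_one n) n
          (hF.eqOn_fixedPoint_iterate n) (by simp only [mem_Iic]; linarith)
    _ = F^[n + 1] 0 y := by rw [Function.iterate_succ_apply']
    _ = fixedPoint F y :=
        (hF.eqOn_fixedPoint_iterate (n + 1) (by simp only [mem_Iic]; push_cast; linarith)).symm

lemma eq_of_isFixedPt (hF : IsUnitDelay F) {f g : ℝ → ℝ} (hf : Function.IsFixedPt F f)
    (hg : Function.IsFixedPt F g) : f = g := by
  have hf0 := hF.eq_zero_of_isFixedPt hf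
  have hg0 := hF.eq_zero_of_isFixedPt hg
  have key : ∀ n : ℕ, EqOn f g (Iic n) := by
    intro n
    induction n with
    | zero =>
      intro x hx
      have hx1 : x < 1 := by simp only [mem_Iic, Nat.cast_zero] at hx; linarith
      rw [hf0 x hx1, hg0 x hx1]
    | succ n ih =>
      rw [← hf, ← hg, Nat.cast_succ]
      exact hF.eqOn_Iic_add_one hf0 hg0 n ih
  funext x
  exact key ⌈x⌉₊ (Nat.le_ceil x)

lemma continuousOn_of_isFixedPt (hF : IsUnitDelay F)
    (hcont : ∀ f, Integrable f → ContinuousOn (F f) (Ici 1)) {η : ℝ → ℝ}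
    (hη : Function.IsFixedPt F η) : ContinuousOn η (Ici 1) := by
  have hη0 := hF.eq_zero_of_isFixedPt hη
  have key : ∀ n : ℕ, ContinuousOn η (Icc 1 n) := by
    intro n
    induction n with
    | zero => simp
    | succ n ih =>
      set M := (Icc 1 (n : ℝ)).indicator η
      have hM0 : ∀ x < 1, M x = 0 := fun x hx =>
        indicator_of_notMem (fun h => (not_le.2 hx) h.1) η
      have hηM : EqOn η M (Iic n) := by
        intro x hx
        rcases lt_or_ge x 1 with h | h
        · rw [hη0 x h, hM0 x h]
        · exact (indicator_of_mem (show x ∈ Icc 1 (n : ℝ) from ⟨h, hx⟩) η).symm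
      have hFηM : EqOn η (F M) (Icc 1 (n + 1 : ℕ)) := fun x hx =>
        (congrFun hη x).symm.trans (hF.eqOn_Iic_add_one hη0 hM0 n hηM (by simpa using hx.2))
      have hM : Integrable M := ih.integrableOn_Icc.integrable_indicator measurableSet_Icc
      exact ((hcont M hM).mono Icc_subset_Ici_self).congr hFηM
  intro y hy
  have hy' : y < (⌈y⌉₊ + 1 : ℕ) := by push_cast; linarith [Nat.le_ceil y]
  refine (key _ y ⟨hy, hy'.le⟩).mono_of_mem_nhdsWithin ?_
  rw [← Ici_inter_Iic]
  exact inter_mem_nhdsWithin _ (Iic_mem_nhds hy')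

end IsUnitDelay

end UnitDelay

section Causality

variable {f g : ℝ → ℝ}

lemma convPow_eq_zero_of_lt (hf : ∀ x < 1, f x = 0) (j : ℕ) :
    ∀ x < (j : ℝ) + 1, convPow f j x = 0 := by
  induction j with
  | zero => simpa only [convPow, Nat.cast_zero, zero_add] using hf
  | succ j ih =>
    intro x hx
    have hzero : ∀ y, f y * convPow f j (x - y) = 0 := by
      intro y
      rcases lt_or_ge y 1 with hy | hy
      · rw [hf y hy, zero_mul]
      · rw [ih (x - y) (by push_cast at hx; linarith), mul_zero]
    simp only [convPow, conv, hzero, integral_zero]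

lemma convPow_eqOn_Iic (hf : ∀ x < 1, f x = 0) (hg : ∀ x < 1, g x = 0) {a : ℝ}
    (hfg : EqOn f g (Iic a)) (j : ℕ) : EqOn (convPow f j) (convPow g j) (Iic (a + j)) := by
  induction j with
  | zero => simpa only [convPow, Nat.cast_zero, add_zero] using hfg
  | succ j ih =>
    intro x hx
    have hx' : x ≤ a + j + 1 := by simp only [mem_Iic, Nat.cast_succ] at hx; linarith
    have hint : ∀ y, f y * convPow f j (x - y) = g y * convPow g j (x - y) := by
      intro y
      rcases lt_or_ge y 1 with hy | hy
      · rw [hf y hy, hg y hy, zero_mul, zero_mul]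
      rcases lt_or_ge (x - y) ((j : ℝ) + 1) with hxy | hxy
      · rw [convPow_eq_zero_of_lt hf j _ hxy, convPow_eq_zero_of_lt hg j _ hxy,
          mul_zero, mul_zero]
      · rw [hfg (show y ≤ a by linarith), ih (show x - y ≤ a + j by linarith)]
    simp only [convPow, conv, hint]

lemma T1_QQ_eqOn_Iic (N : ℕ) (p : ℕ → ℝ) (hf : ∀ x < 1, f x = 0) (hg : ∀ x < 1, g x = 0)
    {a : ℝ} (hfg : EqOn f g (Iic a)) :
    EqOn (T1 (QQ N p f)) (T1 (QQ N p g)) (Iic (a + 1)) := by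
  intro y hy
  simp only [T1, QQ]
  split_ifs
  · refine Finset.sum_congr rfl fun j _ => ?_
    rw [convPow_eqOn_Iic hf hg hfg j (show y - 1 ≤ a + j by
      simp only [mem_Iic] at hy; linarith [(Nat.cast_nonneg j : (0 : ℝ) ≤ j)])]
  · rfl

end Causality

section Integrability

variable {f g : ℝ → ℝ}

lemma integrable_conv (hf : Integrable f) (hg : Integrable g) : Integrable (conv f g) :=
  hf.integrable_convolution (ContinuousLinearMap.mul ℝ ℝ) hg

lemma integrable_convPow (hf : Integrable f) : ∀ j, Integrable (convPow f j)
  | 0 => hf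
  | j + 1 => integrable_conv hf (integrable_convPow hf j)

lemma integrable_QQ (N : ℕ) (p : ℕ → ℝ) (hf : Integrable f) : Integrable (QQ N p f) :=
  integrable_finsetSum _ fun j _ => (integrable_convPow hf j).const_mul _

lemma integrable_T1 (hf : Integrable f) : Integrable (T1 f) := by
  have h : T1 f = (Ici 2).indicator (fun y => f (y - 1)) := by
    funext y
    simp [T1, indicator]
  rw [h]
  exact (hf.comp_sub_right 1).indicator measurableSet_Ici

end Integrability

section StationaryODE

variable (N : ℕ) (p : ℕ → ℝ) (β : ℝ)

def odeMap (f : ℝ → ℝ) : ℝ → ℝ :=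
  fun y => if y < 1 then 0 else (β - β * ∫ t in Icc (1 : ℝ) y, T1 (QQ N p f) t) / y

lemma isUnitDelay_odeMap : IsUnitDelay (odeMap N p β) where
  eq_zero_of_lt_one _ _ hx := if_pos hx
  eqOn_Iic_add_one hf hg _ hfg y hy := by
    simp only [odeMap]
    rw [setIntegral_congr_fun measurableSet_Icc
      fun t ht => T1_QQ_eqOn_Iic N p hf hg hfg (ht.2.trans hy)]

lemma continuousOn_odeMap {f : ℝ → ℝ} (hf : Integrable f) :
    ContinuousOn (odeMap N p β f) (Ici 1) := by
  have hprim : Continuous fun y => ∫ t in (1 : ℝ)..y, T1 (QQ N p f) t :=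
    intervalIntegral.continuous_primitive
      (fun _ _ => (integrable_T1 (integrable_QQ N p hf)).intervalIntegrable) 1
  refine ContinuousOn.congr (f := fun y => (β - β * ∫ t in (1 : ℝ)..y, T1 (QQ N p f) t) / y)
    ?_ fun y hy => ?_
  · exact (continuous_const.sub (continuous_const.mul hprim)).continuousOn.div continuousOn_id
      fun y hy => (zero_lt_one.trans_le hy).ne'
  · simp only [odeMap, if_neg (not_lt.2 (mem_Ici.1 hy))]
    rw [intervalIntegral.integral_of_le hy, integral_Icc_eq_integral_Ioc]

lemma isODESol_iff {η : ℝ → ℝ} :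
    IsODESol N p β η ↔ Function.IsFixedPt (odeMap N p β) η ∧ ContinuousOn η (Ici 1) := by
  constructor
  · rintro ⟨hη0, hcont, hode⟩
    refine ⟨funext fun y => ?_, hcont⟩
    rcases lt_or_ge y 1 with hy | hy
    · rw [hη0 y hy]
      exact if_pos hy
    · rw [odeMap, if_neg (not_lt.2 hy), ← hode y hy,
        mul_div_cancel_left₀ _ (zero_lt_one.trans_le hy).ne']
  · rintro ⟨hfix, hcont⟩
    refine ⟨(isUnitDelay_odeMap N p β).eq_zero_of_isFixedPt hfix, hcont, fun y hy => ?_⟩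
    rw [← congrFun hfix y, odeMap, if_neg (not_lt.2 hy),
      mul_div_cancel₀ _ (zero_lt_one.trans_le hy).ne']

end StationaryODE

theorem ODE_unique_global_solution_general
    (N : ℕ) (p : ℕ → ℝ) (β : ℝ) :
    ∃! η : ℝ → ℝ, IsODESol N p β η := by
  have hF := isUnitDelay_odeMap N p β
  have hfix := hF.isFixedPt_fixedPoint
  refine ⟨_, (isODESol_iff N p β).2 ⟨hfix, hF.continuousOn_of_isFixedPt
    (fun _ => continuousOn_odeMap N p β) hfix⟩, fun η hη => ?_⟩
  exact hF.eq_of_isFixedPt ((isODESol_iff N p β).1 hη).1 hfix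

/-- **Lemma (well-posedness of the stationary ODE).**
For any `β ∈ ℝ`, the equation `(yη)'(y) + β (T₁𝔔[η])(y) = 0` for `y ≥ 1` with
`η(1) = β` (written here in integrated form) has a unique global solution
`η : [1,∞) → ℝ`, extended by zero below `1`. -/
theorem ODE_unique_global_solution
    (N : ℕ) (p : ℕ → ℝ) (hN : 1 ≤ N) (hp : ∀ j, 0 ≤ p j)
    (hpsum : ∑ j ∈ Finset.range N, p (j + 1) = 1) (β : ℝ) :
    ∃! η : ℝ → ℝ, IsODESol N p β η :=
  ODE_unique_global_solution_general N p β

end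
end
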